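/- arXiv:1103.4902 — 6 statements merged into one kernel-verified Lean document; each statement's English description precedes it below -/
import Mathlib

section
/- Let H be a subgroup of the group of invertible N×N complex matrices. Suppose that for every full flag 0 = V₀ ⊂ V₁ ⊂ ⋯ ⊂ V_N = ℂᴺ (with dim V_i = i) the set {h ∈ H : h(V_i) = V_i for all i} is a connected subset of the space of N×N complex matrices. Then for every chain of subspaces 0 = W₀ ⊆ W₁ ⊆ ⋯ ⊆ W_k = ℂᴺ the set {h ∈ H : h(W_j) = W_j for all j} is connected. -/
/-!
If `g ∈ H` stabilizes the chain `W`, the chain is `g`-invariant and refines to a `g`-invariant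
full flag `F`: between consecutive invariant subspaces `p < q`, a lift of an eigenvector of the
map induced by `g` on `q ⧸ p` raises the dimension of `p` by one. The stabilizer of `F` in `H` is
connected, lies in the stabilizer of `W`, and contains both `1` and `g`.
-/

open Module Submodule

def IsFullFlag {R M : Type*} [Semiring R] [AddCommMonoid M] [Module R M] {n : ℕ}
    (F : Fin (n + 1) → Submodule R M) : Prop :=
  Monotone F ∧ F 0 = ⊥ ∧ F (Fin.last n) = ⊤ ∧ ∀ i, finrank R (F i) = i

namespace Module.End

variable {K V : Type*} [Field K] [AddCommGroup V] [Module K V]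

theorem map_eq_of_injective_of_mem_invtSubmodule [FiniteDimensional K V] {f : End K V}
    (hf : Function.Injective f) {p : Submodule K V} (hp : p ∈ f.invtSubmodule) :
    p.map f = p :=
  eq_of_le_of_finrank_eq ((mem_invtSubmodule_iff_map_le f).1 hp)
    (p.equivMapOfInjective f hf).finrank_eq.symm

variable [IsAlgClosed K] [FiniteDimensional K V] (f : End K V)

theorem exists_mem_sub_smul_mem_of_lt {p q : Submodule K V} (hp : p ∈ f.invtSubmodule)
    (hq : q ∈ f.invtSubmodule) (hpq : p < q) :
    ∃ x ∈ q, x ∉ p ∧ ∃ μ : K, f x - μ • x ∈ p := by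
  set pq : Submodule K q := p.comap q.subtype
  have hpq_inv : pq ≤ pq.comap (f.restrict hq) := fun x hx => hp hx
  have : Nontrivial (q ⧸ pq) :=
    Quotient.nontrivial_iff.2 fun h => hpq.not_ge (comap_subtype_eq_top.1 h)
  obtain ⟨μ, hμ⟩ := exists_eigenvalue (pq.mapQ pq (f.restrict hq) hpq_inv)
  obtain ⟨v, hv⟩ := hμ.exists_hasEigenvector
  obtain ⟨x, rfl⟩ := pq.mkQ_surjective v
  refine ⟨x, x.2, fun hx => hv.2 ((Quotient.mk_eq_zero pq).2 hx), μ, ?_⟩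
  have hfx := hv.apply_eq_smul
  rwa [mkQ_apply, mapQ_apply, ← Quotient.mk_smul, ← sub_eq_zero, ← Quotient.mk_sub,
    Quotient.mk_eq_zero] at hfx

theorem exists_mem_invtSubmodule_finrank_eq_succ {p q : Submodule K V}
    (hp : p ∈ f.invtSubmodule) (hq : q ∈ f.invtSubmodule) (hpq : p < q) :
    ∃ p' ∈ f.invtSubmodule, p ≤ p' ∧ p' ≤ q ∧ finrank K p' = finrank K p + 1 := by
  obtain ⟨x, hxq, hxp, μ, hx⟩ := f.exists_mem_sub_smul_mem_of_lt hp hq hpq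
  have hfx : f x ∈ p ⊔ K ∙ x := by
    rw [← sub_add_cancel (f x) (μ • x)]
    exact add_mem (mem_sup_left hx) (mem_sup_right (smul_mem _ _ (mem_span_singleton_self x)))
  refine ⟨p ⊔ K ∙ x, ?_, le_sup_left, sup_le hpq.le ((span_singleton_le_iff_mem x q).2 hxq),
    finrank_sup_span_singleton hxp⟩
  rw [mem_invtSubmodule_iff_map_le, Submodule.map_sup, map_span, Set.image_singleton]
  exact sup_le (((mem_invtSubmodule_iff_map_le f).1 hp).trans le_sup_left)
    ((span_singleton_le_iff_mem _ _).2 hfx)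

variable {f} in
theorem exists_mem_invtSubmodule_finrank_eq_min_succ {S : Set (Submodule K V)}
    (hS : IsChain (· ≤ ·) S) (hSf : S ⊆ f.invtSubmodule) {p : Submodule K V}
    (hp : p ∈ f.invtSubmodule) (hpS : ∀ s ∈ S, s ≤ p ∨ p ≤ s) :
    ∃ p' ∈ f.invtSubmodule, (∀ s ∈ S, s ≤ p' ∨ p' ≤ s) ∧ p ≤ p' ∧
      finrank K p' = min (finrank K p + 1) (finrank K V) := by
  rcases eq_or_ne p ⊤ with rfl | hp_top
  · exact ⟨⊤, hp, hpS, le_rfl, by rw [finrank_top]; omega⟩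
  have hS' : IsChain (· ≤ ·) (insert ⊤ S) := hS.insert fun _ _ _ => Or.inr le_top
  -- squeezing the new subspace below the least member `q` of the chain that is not below `p`
  -- keeps it comparable with the whole chain
  obtain ⟨q, ⟨hqS, hqp⟩, hq_min⟩ := exists_minimal_of_wellFoundedLT
    (fun s => s ∈ insert ⊤ S ∧ ¬ s ≤ p) ⟨⊤, Set.mem_insert _ _, fun h => hp_top (top_le_iff.1 h)⟩
  have hq : q ∈ f.invtSubmodule := by
    rcases hqS with rfl | hqS
    · exact invtSubmodule.top_mem f
    · exact hSf hqS
  have hpq : p < q := by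
    refine lt_of_le_not_ge ?_ hqp
    rcases hqS with rfl | hqS
    · exact le_top
    · exact (hpS q hqS).resolve_left hqp
  obtain ⟨p', hp', hpp', hp'q, hrank⟩ := exists_mem_invtSubmodule_finrank_eq_succ f hp hq hpq
  refine ⟨p', hp', fun s hs => ?_, hpp', ?_⟩
  · by_cases hsp : s ≤ p
    · exact Or.inl (hsp.trans hpp')
    · have hqs : q ≤ s := (hS'.total hqS (Set.mem_insert_of_mem _ hs)).elim id
        fun hsq => hq_min ⟨Set.mem_insert_of_mem _ hs, hsp⟩ hsq
      exact Or.inr (hp'q.trans hqs)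
  · have := finrank_lt hp_top
    omega

theorem exists_isFullFlag_of_isChain {n : ℕ} (hn : finrank K V = n) {S : Set (Submodule K V)}
    (hS : IsChain (· ≤ ·) S) (hSf : S ⊆ f.invtSubmodule) :
    ∃ F : Fin (n + 1) → Submodule K V,
      IsFullFlag F ∧ (∀ i, F i ∈ f.invtSubmodule) ∧ S ⊆ Set.range F := by
  let A := {p : Submodule K V // p ∈ f.invtSubmodule ∧ ∀ s ∈ S, s ≤ p ∨ p ≤ s}
  have : ∀ p : A, ∃ p' : A, p.1 ≤ p'.1 ∧ finrank K p'.1 = min (finrank K p.1 + 1) n := by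
    rintro ⟨p, hp, hpS⟩
    obtain ⟨p', hp', hp'S, hpp', hrank⟩ :=
      exists_mem_invtSubmodule_finrank_eq_min_succ hS hSf hp hpS
    exact ⟨⟨p', hp', hp'S⟩, hpp', hn ▸ hrank⟩
  choose next hle hrank using this
  let U : ℕ → A := fun m => next^[m] ⟨⊥, invtSubmodule.bot_mem f, fun _ _ => Or.inr bot_le⟩
  have hU_succ (m : ℕ) : U (m + 1) = next (U m) := Function.iterate_succ_apply' _ _ _
  have hU_mono : Monotone fun m => (U m).1 :=
    monotone_nat_of_le_succ fun m => hU_succ m ▸ hle (U m)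
  have hU_rank (m : ℕ) : finrank K (U m).1 = min m n := by
    induction m with
    | zero => exact (finrank_bot K V).trans (by omega)
    | succ m ih =>
      rw [hU_succ, hrank, ih]
      omega
  refine ⟨fun i => (U i).1, ⟨fun i j hij => hU_mono hij, rfl, ?_, fun i => ?_⟩,
    fun i => (U i).2.1, fun s hs => ?_⟩
  · exact eq_top_of_finrank_eq (by rw [hU_rank, hn]; simp)
  · rw [hU_rank]
    omega
  · have hs_le : finrank K s ≤ n := hn ▸ finrank_le s
    have hrank_eq : finrank K (U (finrank K s)).1 = finrank K s := by
      rw [hU_rank]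
      omega
    refine ⟨⟨finrank K s, by omega⟩, ?_⟩
    rcases (U (finrank K s)).2.2 s hs with h | h
    · exact (eq_of_le_of_finrank_eq h hrank_eq.symm).symm
    · exact eq_of_le_of_finrank_eq h hrank_eq

end Module.End

section ChainStabilizer

variable {n R ι κ : Type*} [Fintype n] [DecidableEq n]

def chainStabilizer [CommRing R] (H : Subgroup (Matrix.GeneralLinearGroup n R))
    (W : ι → Submodule R (n → R)) : Set (Matrix n n R) :=
  {g | ∃ h ∈ H, (h : Matrix n n R) = g ∧ ∀ i, (W i).map (Matrix.toLin' g) = W i}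

theorem one_mem_chainStabilizer [CommRing R] (H : Subgroup (Matrix.GeneralLinearGroup n R))
    (W : ι → Submodule R (n → R)) : 1 ∈ chainStabilizer H W :=
  ⟨1, H.one_mem, rfl, fun i => by rw [Matrix.toLin'_one, map_id]⟩

theorem chainStabilizer_subset_of_range_subset [CommRing R]
    {H : Subgroup (Matrix.GeneralLinearGroup n R)} {W : ι → Submodule R (n → R)}
    {F : κ → Submodule R (n → R)} (hWF : Set.range W ⊆ Set.range F) :
    chainStabilizer H F ⊆ chainStabilizer H W := by
  rintro _ ⟨h, hH, rfl, hF⟩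
  refine ⟨h, hH, rfl, fun i => ?_⟩
  obtain ⟨j, hj⟩ := hWF (Set.mem_range_self i)
  rw [← hj]
  exact hF j

theorem coe_mem_chainStabilizer_of_mem_invtSubmodule [Field R]
    {H : Subgroup (Matrix.GeneralLinearGroup n R)} {F : κ → Submodule R (n → R)}
    {h : Matrix.GeneralLinearGroup n R} (hH : h ∈ H)
    (hF : ∀ j, F j ∈ End.invtSubmodule (Matrix.toLin' (h : Matrix n n R))) :
    (h : Matrix n n R) ∈ chainStabilizer H F :=
  ⟨h, hH, rfl, fun j => End.map_eq_of_injective_of_mem_invtSubmodule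
    (Matrix.mulVec_injective_of_isUnit h.isUnit) (hF j)⟩

end ChainStabilizer

/-- If a subgroup `H` of `GL(N, ℂ)` has connected intersection with the stabilizer of every
full flag in `ℂᴺ` (i.e. with every Borel subgroup), then it has connected intersection with
the stabilizer of every chain of subspaces (i.e. with every parabolic subgroup). -/
theorem parabolically_connected_of_borel_connected (N : ℕ)
    (H : Subgroup (Matrix.GeneralLinearGroup (Fin N) ℂ))
    (hBorel : ∀ V : Fin (N + 1) → Submodule ℂ (Fin N → ℂ),
      Monotone V → V 0 = ⊥ → V (Fin.last N) = ⊤ →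
      (∀ i : Fin (N + 1), Module.finrank ℂ (V i) = (i : ℕ)) →
      IsConnected {g : Matrix (Fin N) (Fin N) ℂ |
        ∃ h ∈ H, ((h : Matrix.GeneralLinearGroup (Fin N) ℂ) : Matrix (Fin N) (Fin N) ℂ) = g ∧
          ∀ i : Fin (N + 1), (V i).map (Matrix.toLin' g) = V i}) :
    ∀ (k : ℕ) (W : Fin (k + 1) → Submodule ℂ (Fin N → ℂ)),
      Monotone W → W 0 = ⊥ → W (Fin.last k) = ⊤ →
      IsConnected {g : Matrix (Fin N) (Fin N) ℂ |
        ∃ h ∈ H, ((h : Matrix.GeneralLinearGroup (Fin N) ℂ) : Matrix (Fin N) (Fin N) ℂ) = g ∧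
          ∀ j : Fin (k + 1), (W j).map (Matrix.toLin' g) = W j} := by
  intro k W hW_mono _ _
  change IsConnected (chainStabilizer H W)
  refine ⟨⟨1, one_mem_chainStabilizer H W⟩, isPreconnected_of_forall 1 ?_⟩
  rintro _ ⟨h, hH, rfl, hW⟩
  obtain ⟨F, ⟨hF_mono, hF_bot, hF_top, hF_rank⟩, hF_inv, hWF⟩ :=
    End.exists_isFullFlag_of_isChain (Matrix.toLin' (h : Matrix (Fin N) (Fin N) ℂ))
      (finrank_fin_fun ℂ) hW_mono.isChain_range
      (Set.range_subset_iff.2 fun j => (End.mem_invtSubmodule_iff_map_le _).2 (hW j).le)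
  exact ⟨chainStabilizer H F, chainStabilizer_subset_of_range_subset hWF,
    one_mem_chainStabilizer H F, coe_mem_chainStabilizer_of_mem_invtSubmodule hH hF_inv,
    (hBorel F hF_mono hF_bot hF_top hF_rank).isPreconnected⟩
end

section
/- Let V be a 2n-dimensional complex vector space, let ω be a nondegenerate alternating bilinear form on V, and let 0 = V₀ ⊂ V₁ ⊂ ⋯ ⊂ V_{2n} = V be a full flag. Then there exists a basis {e₁,…,e_{2n}} of V such that each V_i is spanned by {e₁,…,e_i}, and there is a fixed-point-free involutive permutation σ of the index set {1,…,2n} with ω(e_i, e_{σ(i)}) = ±1 for all i and ω(e_i, e_j) = 0 whenever j ≠ σ(i). -/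
/-!
Gram–Schmidt along the flag. Process the vectors of an adapted family in order, keeping the
processed ones split into hyperbolic pairs and vectors orthogonal to everything processed so far.
A new vector is first made orthogonal to the pairs. If it still meets some unpaired vector, it is
paired with the first such one, `v m`, and the later unpaired vectors are corrected by multiples
of `v m`. Every change is triangular, so the flag is preserved; at the end nondegeneracy leaves no
vector unpaired.
-/

open Submodule Module

section

variable {K V ι : Type*} [Field K] [AddCommGroup V] [Module K V]

theorem span_image_eq_of_forall_sub_smul_mem [LinearOrder ι] [WellFoundedLT ι]
    {v v' : ι → V} (h : ∀ k, ∃ a : K, a ≠ 0 ∧ v' k - a • v k ∈ span K (v '' Set.Iio k))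
    {t : Set ι} (ht : IsLowerSet t) : span K (v' '' t) = span K (v '' t) := by
  apply le_antisymm <;> rw [span_le] <;> rintro _ ⟨k, hk, rfl⟩
  · obtain ⟨a, -, ha⟩ := h k
    have hlt : span K (v '' Set.Iio k) ≤ span K (v '' t) :=
      span_mono (Set.image_mono fun l hl => ht (le_of_lt hl) hk)
    simpa using add_mem (hlt ha) (smul_mem _ a (subset_span ⟨k, hk, rfl⟩))
  · induction k using WellFoundedLT.induction with
    | _ k ih =>
      obtain ⟨a, ha0, ha⟩ := h k
      have hlt : span K (v '' Set.Iio k) ≤ span K (v' '' t) :=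
        span_le.2 (by rintro _ ⟨l, hl, rfl⟩; exact ih l hl (ht hl.le hk))
      have hvk : v k = a⁻¹ • (v' k - (v' k - a • v k)) := by
        rw [sub_sub_cancel, smul_smul, inv_mul_cancel₀ ha0, one_smul]
      rw [SetLike.mem_coe, hvk]
      exact smul_mem _ _ (sub_mem (subset_span ⟨k, hk, rfl⟩) (hlt ha))

theorem span_image_update_eq [LinearOrder ι] [WellFoundedLT ι] {v : ι → V}
    {k₀ : ι} {x : V} {a : K} (ha : a ≠ 0) (hx : x - a • v k₀ ∈ span K (v '' Set.Iio k₀))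
    {t : Set ι} (ht : IsLowerSet t) : span K (Function.update v k₀ x '' t) = span K (v '' t) := by
  refine span_image_eq_of_forall_sub_smul_mem (fun k => ?_) ht
  rcases eq_or_ne k k₀ with rfl | hk
  · exact ⟨a, ha, by simpa using hx⟩
  · exact ⟨1, one_ne_zero, by simp [Function.update_of_ne hk]⟩

theorem exists_span_image_eq_of_finrank_eq [FiniteDimensional K V] {N : ℕ}
    (F : Fin (N + 1) → Submodule K V) (hmono : Monotone F) (hF : ∀ i, finrank K (F i) = i) :
    ∃ v : Fin N → V, ∀ j, F j = span K (v '' {k | (k : ℕ) < j}) := by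
  have hlt : ∀ k : Fin N, F k.castSucc < F k.succ := fun k =>
    lt_of_le_of_ne (hmono (Fin.castSucc_le_succ k)) fun h => by
      simpa [hF] using congrArg (fun W : Submodule K V => finrank K W) h
  choose v hv using fun k => SetLike.exists_of_lt (hlt k)
  refine ⟨v, fun j => Fin.induction ?_ (fun k ih => ?_) j⟩
  · have hempty : {k : Fin N | (k : ℕ) < (0 : Fin (N + 1))} = ∅ := by ext; simp
    rw [hempty, Set.image_empty, span_empty, ← finrank_eq_zero, hF, Fin.val_zero]
  · have hset : {l : Fin N | (l : ℕ) < k.succ} = insert k {l : Fin N | (l : ℕ) < k.castSucc} := by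
      ext l; simp [le_iff_eq_or_lt, Fin.ext_iff]
    have hle : span K {v k} ⊔ F k.castSucc ≤ F k.succ :=
      sup_le (span_le.2 (Set.singleton_subset_iff.2 (hv k).1)) (hlt k).le
    have hgt : F k.castSucc < span K {v k} ⊔ F k.castSucc :=
      lt_of_le_of_ne le_sup_right fun h => (hv k).2 (h ▸ mem_sup_left (subset_span rfl))
    have hdim := finrank_lt_finrank_of_lt hgt
    rw [hF, Fin.val_castSucc] at hdim
    rw [hset, Set.image_insert_eq, span_insert, ← ih]
    exact (eq_of_le_of_finrank_le hle (by rw [hF, Fin.val_succ]; omega)).symm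

theorem Function.Involutive.swap_comp_apply_of_ne [DecidableEq ι] {σ : ι → ι}
    (hσ : Function.Involutive σ) {a b : ι} (ha : σ a = a) (hb : σ b = b) {k : ι} (hka : k ≠ a)
    (hkb : k ≠ b) : (Equiv.swap a b ∘ σ) k = σ k :=
  Equiv.swap_apply_of_ne_of_ne (fun h => hka (by rw [← hσ k, h, ha]))
    (fun h => hkb (by rw [← hσ k, h, hb]))

theorem Function.Involutive.swap_comp [DecidableEq ι] {σ : ι → ι} (hσ : Function.Involutive σ)
    {a b : ι} (ha : σ a = a) (hb : σ b = b) : Function.Involutive (Equiv.swap a b ∘ σ) := by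
  intro k
  by_cases hka : k = a
  · simp [hka, ha, hb]
  by_cases hkb : k = b
  · simp [hkb, ha, hb]
  have hσka : σ k ≠ a := fun h => hka (by rw [← hσ k, h, ha])
  have hσkb : σ k ≠ b := fun h => hkb (by rw [← hσ k, h, hb])
  rw [hσ.swap_comp_apply_of_ne ha hb hka hkb, hσ.swap_comp_apply_of_ne ha hb hσka hσkb, hσ k]

variable {ω : LinearMap.BilinForm K V} {v : ι → V} {σ : ι → ι} {s : Finset ι}

/-- On `s`, the family `v` consists of hyperbolic pairs `v k, v (σ k)` and of vectors indexed by
fixed points of `σ`, which are orthogonal to all of `v '' s`. -/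
structure IsHyperbolicOn (ω : LinearMap.BilinForm K V) (v : ι → V) (σ : ι → ι) (s : Finset ι) :
    Prop where
  involutive : Function.Involutive σ
  apply_eq_self_of_notMem : ∀ k ∉ s, σ k = k
  apply_partner : ∀ k ∈ s, σ k ≠ k → ω (v k) (v (σ k)) = 1 ∨ ω (v k) (v (σ k)) = -1
  apply_eq_zero : ∀ k ∈ s, ∀ l ∈ s, l ≠ σ k → ω (v k) (v l) = 0

namespace IsHyperbolicOn

theorem empty (ω : LinearMap.BilinForm K V) (v : ι → V) : IsHyperbolicOn ω v id ∅ where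
  involutive _ := rfl
  apply_eq_self_of_notMem _ _ := rfl
  apply_partner _ h := absurd h (Finset.notMem_empty _)
  apply_eq_zero _ h := absurd h (Finset.notMem_empty _)

theorem apply_mem (h : IsHyperbolicOn ω v σ s) {k : ι} (hk : σ k ≠ k) : σ k ∈ s := by
  by_contra hs
  exact hk (by simpa [h.involutive k] using (h.apply_eq_self_of_notMem _ hs).symm)

theorem mem_of_apply_ne (h : IsHyperbolicOn ω v σ s) {k : ι} (hk : σ k ≠ k) : k ∈ s := by
  by_contra hs
  exact hk (h.apply_eq_self_of_notMem k hs)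

theorem apply_fixed_eq_zero (h : IsHyperbolicOn ω v σ s) (hω : ω.IsAlt) {k l : ι} (hk : k ∈ s)
    (hσk : σ k = k) (hl : l ∈ s) : ω (v k) (v l) = 0 := by
  rcases eq_or_ne l k with rfl | hlk
  · exact hω.self_eq_zero _
  · exact h.apply_eq_zero k hk l hl (by rwa [hσk])

theorem exists_sub_mem_span (h : IsHyperbolicOn ω v σ s) (x : V) :
    ∃ w, w - x ∈ span K (v '' s) ∧ ∀ l ∈ s, σ l ≠ l → ω w (v l) = 0 := by
  classical
  let P := s.filter fun p => σ p ≠ p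
  -- `ω (v p) (v (σ p)) = ±1` is its own inverse.
  let c : ι → K := fun p => ω x (v (σ p)) * ω (v p) (v (σ p))
  refine ⟨x - ∑ p ∈ P, c p • v p, ?_, fun l hl hσl => ?_⟩
  · rw [sub_sub_cancel_left]
    exact neg_mem (sum_mem fun p hp =>
      smul_mem _ _ (subset_span ⟨p, (Finset.mem_filter.1 hp).1, rfl⟩))
  have hσσl : σ (σ l) ≠ σ l := by rw [h.involutive l]; exact Ne.symm hσl
  have hsum : ∑ p ∈ P, c p * ω (v p) (v l) = c (σ l) * ω (v (σ l)) (v l) := by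
    refine Finset.sum_eq_single (σ l) (fun p hp hpl => ?_) (fun hn => ?_)
    · rw [h.apply_eq_zero p (Finset.mem_filter.1 hp).1 l hl
        (fun hlp => hpl (by rw [hlp, h.involutive])), mul_zero]
    · exact absurd (show σ l ∈ P from Finset.mem_filter.2 ⟨h.apply_mem hσl, hσσl⟩) hn
  have hsq : ω (v (σ l)) (v l) * ω (v (σ l)) (v l) = 1 := by
    have := h.apply_partner (σ l) (h.apply_mem hσl) hσσl
    rw [h.involutive l] at this
    rcases this with h1 | h1 <;> rw [h1] <;> norm_num
  simp only [map_sub, map_sum, map_smul, LinearMap.sub_apply, LinearMap.sum_apply,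
    LinearMap.smul_apply, smul_eq_mul]
  rw [hsum, mul_assoc, h.involutive l, hsq, mul_one, sub_self]

theorem sub_smul_fixed (h : IsHyperbolicOn ω v σ s) (hω : ω.IsAlt) {m : ι} (hm : m ∈ s)
    (hσm : σ m = m) (d : ι → K) (hd : ∀ k ∈ s, σ k ≠ k → d k = 0) :
    IsHyperbolicOn ω (fun k => v k - d k • v m) σ s where
  involutive := h.involutive
  apply_eq_self_of_notMem := h.apply_eq_self_of_notMem
  apply_partner k hk hσk := by
    simpa [hd k hk hσk, hd (σ k) (h.apply_mem hσk) (by rwa [h.involutive k, ne_comm])]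
      using h.apply_partner k hk hσk
  apply_eq_zero k hk l hl hlk := by
    have hml : ω (v m) (v l) = 0 := h.apply_fixed_eq_zero hω hm hσm hl
    have hkm : ω (v k) (v m) = 0 := hω.isRefl _ _ (h.apply_fixed_eq_zero hω hm hσm hk)
    have hkl : ω (v k) (v l) = 0 := h.apply_eq_zero k hk l hl hlk
    simp [hml, hkm, hkl, hω.self_eq_zero]

theorem update_insert [DecidableEq ι] (h : IsHyperbolicOn ω v σ s) (hω : ω.IsAlt) {k₀ : ι}
    (hk₀ : k₀ ∉ s) {x : V} (hx : ∀ l ∈ s, ω x (v l) = 0) :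
    IsHyperbolicOn ω (Function.update v k₀ x) σ (insert k₀ s) := by
  have hupd : ∀ l ∈ s, Function.update v k₀ x l = v l := fun l hl =>
    Function.update_of_ne (ne_of_mem_of_not_mem hl hk₀) _ _
  refine ⟨h.involutive, fun k hk => ?_, fun k _ hσk => ?_, fun k hk l hl hlk => ?_⟩
  · exact h.apply_eq_self_of_notMem k fun hks => hk (Finset.mem_insert_of_mem hks)
  · rw [hupd k (h.mem_of_apply_ne hσk), hupd _ (h.apply_mem hσk)]
    exact h.apply_partner k (h.mem_of_apply_ne hσk) hσk
  · rcases Finset.mem_insert.1 hk with rfl | hks <;> rcases Finset.mem_insert.1 hl with rfl | hls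
    · simpa using hω.self_eq_zero x
    · rw [Function.update_self, hupd l hls]
      exact hx l hls
    · rw [Function.update_self, hupd k hks]
      exact hω.isRefl _ _ (hx k hks)
    · rw [hupd k hks, hupd l hls]
      exact h.apply_eq_zero k hks l hls hlk

theorem update_insert_swap [DecidableEq ι] (h : IsHyperbolicOn ω v σ s) (hω : ω.IsAlt)
    {k₀ m : ι} (hk₀ : k₀ ∉ s) (hm : m ∈ s) (hσm : σ m = m) {x : V}
    (hx : ∀ l ∈ s, l ≠ m → ω x (v l) = 0) (hxm : ω x (v m) = 1) :
    IsHyperbolicOn ω (Function.update v k₀ x) (Equiv.swap k₀ m ∘ σ) (insert k₀ s) := by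
  have hσk₀ : σ k₀ = k₀ := h.apply_eq_self_of_notMem k₀ hk₀
  have hσ'k₀ : (Equiv.swap k₀ m ∘ σ) k₀ = m := by simp [hσk₀]
  have hσ'm : (Equiv.swap k₀ m ∘ σ) m = k₀ := by simp [hσm]
  have hσ' : ∀ k, k ≠ k₀ → k ≠ m → (Equiv.swap k₀ m ∘ σ) k = σ k := fun _ =>
    h.involutive.swap_comp_apply_of_ne hσk₀ hσm
  have hupd : ∀ l ∈ s, Function.update v k₀ x l = v l := fun l hl =>
    Function.update_of_ne (ne_of_mem_of_not_mem hl hk₀) _ _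
  refine ⟨h.involutive.swap_comp hσk₀ hσm, fun k hk => ?_, fun k hk hσk => ?_,
    fun k hk l hl hlk => ?_⟩
  · have hks : k ∉ s := fun hks => hk (Finset.mem_insert_of_mem hks)
    rw [hσ' k (fun h' => hk (h' ▸ Finset.mem_insert_self _ _))
      (fun h' => hks (h' ▸ hm)), h.apply_eq_self_of_notMem k hks]
  · rcases Finset.mem_insert.1 hk with rfl | hks
    · rw [hσ'k₀, Function.update_self, hupd m hm]
      exact Or.inl hxm
    by_cases hkm : k = m
    · subst hkm
      rw [hσ'm, Function.update_self, hupd k hks, ← hω.neg_eq, hxm]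
      exact Or.inr rfl
    have hk₀' : k ≠ k₀ := ne_of_mem_of_not_mem hks hk₀
    rw [hσ' k hk₀' hkm] at hσk ⊢
    rw [hupd k hks, hupd _ (h.apply_mem hσk)]
    exact h.apply_partner k hks hσk
  · rcases Finset.mem_insert.1 hk with rfl | hks <;> rcases Finset.mem_insert.1 hl with rfl | hls
    · simpa using hω.self_eq_zero x
    · rw [Function.update_self, hupd l hls]
      exact hx l hls (by rwa [hσ'k₀] at hlk)
    · have hkm : k ≠ m := fun hkm => hlk (by rw [hkm, hσ'm])
      rw [Function.update_self, hupd k hks]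
      exact hω.isRefl _ _ (hx k hks hkm)
    · rw [hupd k hks, hupd l hls]
      by_cases hkm : k = m
      · exact h.apply_fixed_eq_zero hω hks (hkm ▸ hσm) hls
      · exact h.apply_eq_zero k hks l hls
          (by rwa [hσ' k (ne_of_mem_of_not_mem hks hk₀) hkm] at hlk)

theorem apply_ne_self [Fintype ι] (h : IsHyperbolicOn ω v σ Finset.univ) (hω : ω.IsAlt)
    (hnd : ω.Nondegenerate) (hv : ⊤ ≤ span K (Set.range v)) {k : ι} (hk : v k ≠ 0) :
    σ k ≠ k := by
  intro hσk
  have hvk : ω (v k) = 0 := LinearMap.ext_on (top_unique hv) (by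
    rintro _ ⟨l, rfl⟩
    exact h.apply_fixed_eq_zero hω (Finset.mem_univ k) hσk (Finset.mem_univ l))
  exact hk (hnd.1 (v k) fun y => by rw [hvk, LinearMap.zero_apply])

section Order

variable [LinearOrder ι] [WellFoundedLT ι]

/-- `k₀` is paired with `m`. Subtracting multiples of `v m` makes the other unpaired vectors
orthogonal to `w`; by minimality of `m` only indices above `m` are touched, so the flag is kept. -/
theorem exists_insert_of_apply_ne_zero (h : IsHyperbolicOn ω v σ s) (hω : ω.IsAlt) {k₀ : ι}
    (hs : ∀ k ∈ s, k < k₀) {w : V} (hw : w - v k₀ ∈ span K (v '' s))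
    (hwσ : ∀ l ∈ s, σ l ≠ l → ω w (v l) = 0) {m : ι} (hm : m ∈ s) (hσm : σ m = m)
    (hwm : ω w (v m) ≠ 0) (hmin : ∀ l ∈ s, σ l = l → ω w (v l) ≠ 0 → m ≤ l) :
    ∃ (v' : ι → V) (σ' : ι → ι), (∀ t, IsLowerSet t → span K (v' '' t) = span K (v '' t)) ∧
      IsHyperbolicOn ω v' σ' (insert k₀ s) := by
  classical
  have hk₀ : k₀ ∉ s := fun hk => lt_irrefl _ (hs k₀ hk)
  let d : ι → K := fun k => if k ∈ s ∧ σ k = k ∧ m < k then ω w (v k) / ω w (v m) else 0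
  have hd_lt : ∀ k, d k ≠ 0 → m < k := fun k hk => by
    by_contra hmk
    exact hk (if_neg fun hk' => hmk hk'.2.2)
  have hwd : ∀ l ∈ s, l ≠ m → ω w (v l) = d l * ω w (v m) := by
    intro l hl hlm
    by_cases hσl : σ l = l
    · by_cases hml : m < l
      · simp [d, hl, hσl, hml, div_mul_cancel₀ _ hwm]
      · have hwl : ω w (v l) = 0 := by
          by_contra hwl
          exact hml (lt_of_le_of_ne (hmin l hl hσl hwl) (Ne.symm hlm))
        simp [d, hml, hwl]
    · simp [d, hσl, hwσ l hl hσl]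
  let v₁ : ι → V := fun k => v k - d k • v m
  have h₁ : IsHyperbolicOn ω v₁ σ s :=
    h.sub_smul_fixed hω hm hσm d fun k _ hσk => if_neg fun hk => hσk hk.2.1
  have hspan₁ : ∀ t, IsLowerSet t → span K (v₁ '' t) = span K (v '' t) := by
    refine fun t ht => span_image_eq_of_forall_sub_smul_mem (fun k => ⟨1, one_ne_zero, ?_⟩) ht
    rw [one_smul, sub_sub_cancel_left]
    by_cases hdk : d k = 0
    · simp [hdk]
    · exact neg_mem (smul_mem _ _ (subset_span ⟨m, hd_lt k hdk, rfl⟩))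
  have hx : ∀ l ∈ s, l ≠ m → ω ((ω w (v m))⁻¹ • w) (v₁ l) = 0 := fun l hl hlm => by
    simp [v₁, hwd l hl hlm]
  have hxm : ω ((ω w (v m))⁻¹ • w) (v₁ m) = 1 := by
    simp [v₁, d, hwm]
  refine ⟨_, _, fun t ht => ?_, h₁.update_insert_swap hω hk₀ hm hσm hx hxm⟩
  refine (span_image_update_eq (inv_ne_zero hwm) ?_ ht).trans (hspan₁ t ht)
  rw [show v₁ k₀ = v k₀ by simp [v₁, d, hk₀], ← smul_sub, hspan₁ _ (isLowerSet_Iio k₀)]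
  exact smul_mem _ _ (span_mono (Set.image_mono hs) hw)

theorem exists_insert (h : IsHyperbolicOn ω v σ s)
    (hω : ω.IsAlt) {k₀ : ι} (hs : ∀ k ∈ s, k < k₀) :
    ∃ (v' : ι → V) (σ' : ι → ι), (∀ t, IsLowerSet t → span K (v' '' t) = span K (v '' t)) ∧
      IsHyperbolicOn ω v' σ' (insert k₀ s) := by
  obtain ⟨w, hw, hwσ⟩ := h.exists_sub_mem_span (v k₀)
  by_cases hfix : ∃ m ∈ s, σ m = m ∧ ω w (v m) ≠ 0
  · classical
    obtain ⟨m, hm, hmin⟩ := (s.filter fun m => σ m = m ∧ ω w (v m) ≠ 0).exists_min_image id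
      (by simpa [Finset.filter_nonempty_iff] using hfix)
    obtain ⟨hms, hσm, hwm⟩ := Finset.mem_filter.1 hm
    exact h.exists_insert_of_apply_ne_zero hω hs hw hwσ hms hσm hwm
      fun l hl hσl hwl => hmin l (Finset.mem_filter.2 ⟨hl, hσl, hwl⟩)
  push Not at hfix
  refine ⟨Function.update v k₀ w, σ, fun t ht => span_image_update_eq one_ne_zero ?_ ht,
    h.update_insert hω (fun hk => lt_irrefl _ (hs k₀ hk)) fun l hl => ?_⟩
  · simpa using span_mono (Set.image_mono fun k hk => Set.mem_Iio.2 (hs k hk)) hw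
  · by_cases hσl : σ l = l
    exacts [hfix l hl hσl, hwσ l hl hσl]

end Order

end IsHyperbolicOn

theorem exists_isHyperbolicOn [LinearOrder ι] [WellFoundedLT ι] (hω : ω.IsAlt)
    (v : ι → V) (s : Finset ι) :
    ∃ (v' : ι → V) (σ : ι → ι), (∀ t, IsLowerSet t → span K (v' '' t) = span K (v '' t)) ∧
      IsHyperbolicOn ω v' σ s := by
  induction s using Finset.induction_on_max with
  | empty => exact ⟨v, id, fun _ _ => rfl, IsHyperbolicOn.empty ω v⟩
  | insert k₀ s hs ih =>
    obtain ⟨v₁, σ₁, hspan₁, h₁⟩ := ih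
    obtain ⟨v₂, σ₂, hspan₂, h₂⟩ := h₁.exists_insert hω hs
    exact ⟨v₂, σ₂, fun t ht => (hspan₂ t ht).trans (hspan₁ t ht), h₂⟩

end

/-- Given a nondegenerate alternating bilinear form `ω` on a `2n`-dimensional complex vector
space `V` and a full flag in `V`, there is a basis compatible with the flag and hyperbolic
with respect to `ω`. -/
theorem exists_hyperbolic_basis_compatible_with_flag (n : ℕ) (V : Type)
    [AddCommGroup V] [Module ℂ V] [FiniteDimensional ℂ V]
    (hdim : Module.finrank ℂ V = 2 * n)
    (ω : LinearMap.BilinForm ℂ V) (halt : ω.IsAlt) (hnd : ω.Nondegenerate)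
    (F : Fin (2 * n + 1) → Submodule ℂ V) (hmono : Monotone F)
    (hF : ∀ i : Fin (2 * n + 1), Module.finrank ℂ (F i) = (i : ℕ)) :
    ∃ (e : Module.Basis (Fin (2 * n)) ℂ V) (σ : Equiv.Perm (Fin (2 * n))),
      (∀ i : Fin (2 * n + 1),
        F i = Submodule.span ℂ ((fun j => e j) '' {j : Fin (2 * n) | (j : ℕ) < (i : ℕ)})) ∧
      (∀ i, σ (σ i) = i) ∧ (∀ i, σ i ≠ i) ∧
      (∀ i, ω (e i) (e (σ i)) = 1 ∨ ω (e i) (e (σ i)) = -1) ∧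
      (∀ i j, j ≠ σ i → ω (e i) (e j) = 0) := by
  obtain ⟨v₀, hv₀⟩ := exists_span_image_eq_of_finrank_eq F hmono hF
  obtain ⟨v, σ, hspan, hσ⟩ := exists_isHyperbolicOn halt v₀ Finset.univ
  have hflag : ∀ i : Fin (2 * n + 1), F i = span ℂ (v '' {j | (j : ℕ) < (i : ℕ)}) := fun i =>
    (hv₀ i).trans (hspan {j | (j : ℕ) < (i : ℕ)} fun _ _ hba ha => Nat.lt_of_le_of_lt hba ha).symm
  have htop : ⊤ ≤ span ℂ (Set.range v) := by
    have hlast : F (Fin.last _) = ⊤ := eq_top_of_finrank_eq (by rw [hF, hdim, Fin.val_last])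
    have hall : {j : Fin (2 * n) | (j : ℕ) < (Fin.last (2 * n) : ℕ)} = Set.univ :=
      Set.eq_univ_of_forall fun j => j.isLt
    rw [← Set.image_univ, ← hall, ← hflag, hlast]
  let e := basisOfTopLeSpanOfCardEqFinrank v htop (by simp [hdim])
  have he : ⇑e = v := coe_basisOfTopLeSpanOfCardEqFinrank v htop _
  have hfree : ∀ k, σ k ≠ k := fun k => hσ.apply_ne_self halt hnd htop (he ▸ e.ne_zero k)
  refine ⟨e, hσ.involutive.toPerm σ, ?_, hσ.involutive, hfree, ?_, ?_⟩ <;> simp only [he]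
  · exact hflag
  · exact fun i => hσ.apply_partner i (Finset.mem_univ i) (hfree i)
  · exact fun i j => hσ.apply_eq_zero i (Finset.mem_univ i) j (Finset.mem_univ j)
end

section
/- Let m, n ≥ 0 and N = m + n. Let U = span{e₁,…,e_m} and W = span{e_{m+1},…,e_N} be the standard coordinate subspaces of ℂᴺ. For every chain of subspaces 0 = W₀ ⊆ W₁ ⊆ ⋯ ⊆ W_k = ℂᴺ, the set {g ∈ GL(N,ℂ) : g(U) = U, g(W) = W, and g(W_j) = W_j for all j} is a connected subset of the space of N×N complex matrices. (In other words, the subgroup GL(m)×GL(n) ⊂ GL(m+n) is parabolically connected.) -/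
/-- The coordinate subspace of `ℂ^{m+n}` spanned by the first `m` standard basis vectors. -/
noncomputable def stdU (m n : ℕ) : Submodule ℂ (Fin (m + n) → ℂ) :=
  Submodule.span ℂ (Set.range fun i : Fin m => (Pi.single (Fin.castAdd n i) 1 : Fin (m + n) → ℂ))

/-- The coordinate subspace of `ℂ^{m+n}` spanned by the last `n` standard basis vectors. -/
noncomputable def stdW (m n : ℕ) : Submodule ℂ (Fin (m + n) → ℂ) :=
  Submodule.span ℂ (Set.range fun i : Fin n => (Pi.single (Fin.natAdd m i) 1 : Fin (m + n) → ℂ))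

/-- If a matrix with unit determinant maps a submodule into itself, it maps it onto itself. -/
lemma aux_map_eq_of_isUnit {N : ℕ} {g : Matrix (Fin N) (Fin N) ℂ} (hg : IsUnit g.det)
    {p : Submodule ℂ (Fin N → ℂ)} (h : p.map (Matrix.toLin' g) ≤ p) :
    p.map (Matrix.toLin' g) = p := by
  have hinv : Invertible g := g.invertibleOfIsUnitDet hg
  have hfin : Module.finrank ℂ (p.map (Matrix.toLin' g)) = Module.finrank ℂ p := by
    rw [← Matrix.toLinearEquiv'_apply g hinv]
    exact LinearEquiv.finrank_map_eq (g.toLinearEquiv' hinv) p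
  exact Submodule.eq_of_le_of_finrank_le h hfin.ge

/-- Matrices on the line through `1` and a stabilizing matrix map the submodule into itself. -/
lemma aux_seg_maps_le {N : ℕ} (g : Matrix (Fin N) (Fin N) ℂ)
    (p : Submodule ℂ (Fin N → ℂ)) (h : p.map (Matrix.toLin' g) ≤ p) (t : ℂ) :
    p.map (Matrix.toLin' (t • g + (1 - t) • 1)) ≤ p := by
  rintro x ⟨y, hy, rfl⟩
  have hx : Matrix.toLin' (t • g + (1 - t) • (1 : Matrix (Fin N) (Fin N) ℂ)) y
      = t • Matrix.toLin' g y + (1 - t) • y := by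
    simp [map_add, map_smul, Matrix.toLin'_one]
  rw [hx]
  exact p.add_mem (p.smul_mem t (h ⟨y, hy, rfl⟩)) (p.smul_mem (1 - t) hy)

/-- The determinant along the line through `1` and `g` is a polynomial function of `t`. -/
lemma aux_det_poly {N : ℕ} (g : Matrix (Fin N) (Fin N) ℂ) (t : ℂ) :
    (((Polynomial.X : Polynomial ℂ) • g.map Polynomial.C +
      ((1 : Polynomial ℂ) - Polynomial.X) • 1 :
        Matrix (Fin N) (Fin N) (Polynomial ℂ))).det.eval t
      = (t • g + (1 - t) • 1).det := by
  have := RingHom.map_det (Polynomial.evalRingHom t)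
    (((Polynomial.X : Polynomial ℂ) • g.map Polynomial.C +
      ((1 : Polynomial ℂ) - Polynomial.X) • 1 : Matrix (Fin N) (Fin N) (Polynomial ℂ)))
  simp only [Polynomial.coe_evalRingHom] at this
  rw [this]
  congr 1
  ext i j
  simp only [RingHom.mapMatrix_apply, Polynomial.coe_evalRingHom, Matrix.map_apply, Matrix.add_apply, Matrix.smul_apply,
    Matrix.one_apply, smul_eq_mul, mul_ite, mul_one, mul_zero, apply_ite (Polynomial.eval t),
    Polynomial.eval_add, Polynomial.eval_mul, Polynomial.eval_sub, Polynomial.eval_one,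
    Polynomial.eval_zero, Polynomial.eval_X, Polynomial.eval_C]

/-- The subgroup `GL(m) × GL(n) ⊂ GL(m+n)` is parabolically connected: its intersection with
the stabilizer of any chain of subspaces of `ℂ^{m+n}` is connected. -/
theorem glgl_parabolically_connected (m n : ℕ) :
    ∀ (k : ℕ) (Wc : Fin (k + 1) → Submodule ℂ (Fin (m + n) → ℂ)),
      Monotone Wc → Wc 0 = ⊥ → Wc (Fin.last k) = ⊤ →
      IsConnected {g : Matrix (Fin (m + n)) (Fin (m + n)) ℂ |
        IsUnit g.det ∧
        (stdU m n).map (Matrix.toLin' g) = stdU m n ∧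
        (stdW m n).map (Matrix.toLin' g) = stdW m n ∧
        ∀ j : Fin (k + 1), (Wc j).map (Matrix.toLin' g) = Wc j} := by
  intro k Wc _ _ _
  set S : Set (Matrix (Fin (m + n)) (Fin (m + n)) ℂ) := {g |
        IsUnit g.det ∧
        (stdU m n).map (Matrix.toLin' g) = stdU m n ∧
        (stdW m n).map (Matrix.toLin' g) = stdW m n ∧
        ∀ j : Fin (k + 1), (Wc j).map (Matrix.toLin' g) = Wc j} with hS
  have h1 : (1 : Matrix (Fin (m + n)) (Fin (m + n)) ℂ) ∈ S := by
    refine ⟨by simp, ?_, ?_, fun j => ?_⟩ <;>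
      simp [Matrix.toLin'_one, Submodule.map_id]
  have hpath : IsPathConnected S := by
    refine ⟨1, h1, fun {g} hg => ?_⟩
    obtain ⟨hdet, hU, hW, hWc⟩ := hg
    -- the segment through 1 and g, parametrized by ℂ
    have hPeval : ∀ t : ℂ,
        (((Polynomial.X : Polynomial ℂ) • g.map Polynomial.C +
          ((1 : Polynomial ℂ) - Polynomial.X) • 1 :
            Matrix (Fin (m + n)) (Fin (m + n)) (Polynomial ℂ))).det.eval t
          = (t • g + (1 - t) • 1).det := fun t => aux_det_poly g t
    have hPne : (((Polynomial.X : Polynomial ℂ) • g.map Polynomial.C +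
          ((1 : Polynomial ℂ) - Polynomial.X) • 1 :
            Matrix (Fin (m + n)) (Fin (m + n)) (Polynomial ℂ))).det ≠ 0 := by
      intro h0
      have h1' := hPeval 1
      rw [h0] at h1'
      simp only [Polynomial.eval_zero, one_smul, sub_self, zero_smul, add_zero] at h1'
      exact hdet.ne_zero h1'.symm
    -- the bad set of parameters is finite
    have hfin : Set.Finite {t : ℂ | ((t • g + (1 - t) • 1 :
        Matrix (Fin (m + n)) (Fin (m + n)) ℂ)).det = 0} := by
      refine (Polynomial.finite_setOf_isRoot hPne).subset ?_
      intro t ht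
      simp only [Set.mem_setOf_eq, Polynomial.IsRoot, hPeval t]
      exact ht
    have hrank : 1 < Module.rank ℝ ℂ := by
      rw [Complex.rank_real_complex]; norm_num
    have hcompl : IsPathConnected ({t : ℂ | ((t • g + (1 - t) • 1 :
        Matrix (Fin (m + n)) (Fin (m + n)) ℂ)).det = 0}ᶜ) :=
      Set.Countable.isPathConnected_compl_of_one_lt_rank hrank hfin.countable
    have h0mem : (0 : ℂ) ∈ {t : ℂ | ((t • g + (1 - t) • 1 :
        Matrix (Fin (m + n)) (Fin (m + n)) ℂ)).det = 0}ᶜ := by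
      simp
    have h1mem : (1 : ℂ) ∈ {t : ℂ | ((t • g + (1 - t) • 1 :
        Matrix (Fin (m + n)) (Fin (m + n)) ℂ)).det = 0}ᶜ := by
      simp only [Set.mem_compl_iff, Set.mem_setOf_eq, one_smul, sub_self, zero_smul, add_zero]
      exact hdet.ne_zero
    obtain ⟨γ, hγ⟩ := hcompl.joinedIn 0 h0mem 1 h1mem
    -- push the path forward
    have hLcont : Continuous fun t : ℂ =>
        (t • g + (1 - t) • 1 : Matrix (Fin (m + n)) (Fin (m + n)) ℂ) := by
      exact (continuous_id.smul continuous_const).add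
        ((continuous_const.sub continuous_id).smul continuous_const)
    refine ⟨(γ.map hLcont).cast (by simp) (by simp), ?_⟩
    intro t
    simp only [Path.cast_coe, Path.map_coe, Function.comp_apply]
    have hγt := hγ t
    simp only [Set.mem_compl_iff, Set.mem_setOf_eq] at hγt
    have hdet' : IsUnit ((γ t : ℂ) • g + (1 - (γ t : ℂ)) • 1 :
        Matrix (Fin (m + n)) (Fin (m + n)) ℂ).det := isUnit_iff_ne_zero.mpr hγt
    exact ⟨hdet',
      aux_map_eq_of_isUnit hdet' (aux_seg_maps_le g _ hU.le _),
      aux_map_eq_of_isUnit hdet' (aux_seg_maps_le g _ hW.le _),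
      fun j => aux_map_eq_of_isUnit hdet' (aux_seg_maps_le g _ (hWc j).le _)⟩
  exact hpath.isConnected
end

section
/- Let m, n ≥ 0 and N = m + n. Let U = span{e₁,…,e_m} and W = span{e_{m+1},…,e_N} be the standard coordinate subspaces of ℂᴺ. For every chain of subspaces 0 = W₀ ⊆ W₁ ⊆ ⋯ ⊆ W_k = ℂᴺ, the set {g ∈ GL(N,ℂ) : g(U) = U, g(W) = W, det(g|_U) = 1, and g(W_j) = W_j for all j} is a connected subset of the space of N×N complex matrices. (In other words, the subgroup SL(m)×GL(n) ⊂ GL(m+n) is parabolically connected.) -/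
/-!
Let `A` be the algebra of matrices preserving `U`, `W` and every `W_j`, and `T` its group of
units. Our set is the kernel of the character `D g = det (g|_U)` of `T`. `T` is connected: the
complex line through two units lies in `A` and meets the non-units only at the finitely many roots
of a nonzero polynomial. `D` is multiplicative on `A`, whose elements are block upper triangular,
so a continuous family `s a ∈ T` with `D (s a) = a` gives the retraction `g ↦ g * s (D g)⁻¹` of
`T` onto the kernel. We take `s a = 1 + (a - 1) • e` for an idempotent `e ∈ A` whose restriction to
`U` has rank one; it is built from the first member of the flag that is not contained in `W`.
-/

open Matrix

open Polynomial in
theorem Submodule.isPreconnected_setOf_isUnit_det {ι : Type*} [Fintype ι] [DecidableEq ι]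
    (A : Submodule ℂ (Matrix ι ι ℂ)) : IsPreconnected {g | g ∈ A ∧ IsUnit g.det} := by
  refine isPreconnected_of_forall_pair fun x ⟨hxA, hx⟩ y ⟨hyA, hy⟩ => ?_
  set line : ℂ → Matrix ι ι ℂ := fun t => x + t • (y - x)
  set q : ℂ[X] := (x.map C + (X : ℂ[X]) • (y - x).map C).det
  have eval_q (t : ℂ) : q.eval t = (line t).det := by
    rw [← coe_evalRingHom, RingHom.map_det]
    congr 1
    ext i j
    simp [line]
  have hq : q ≠ 0 := fun h => hx.ne_zero (by simpa [line, h] using (eval_q 0).symm)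
  have hΩ : IsPreconnected {t | q.eval t ≠ 0} :=
    ((finite_setOfPred_isRoot hq).countable.isConnected_compl_of_one_lt_rank
      (by simp)).isPreconnected
  refine ⟨line '' {t | q.eval t ≠ 0}, ?_, ⟨0, ?_, by simp [line]⟩, ⟨1, ?_, by simp [line]⟩,
    hΩ.image _ (by fun_prop : Continuous line).continuousOn⟩
  · rintro _ ⟨t, ht, rfl⟩
    refine ⟨A.add_mem hxA (A.smul_mem t (A.sub_mem hyA hxA)), ?_⟩
    rw [isUnit_iff_ne_zero, ← eval_q]
    exact ht
  · simpa [eval_q, line] using hx.ne_zero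
  · simpa [eval_q, line] using hy.ne_zero

theorem IsConnected.sep_eq_one_of_mul_section {M G₀ : Type*} [Monoid M] [TopologicalSpace M]
    [ContinuousMul M] [GroupWithZero G₀] [TopologicalSpace G₀] [ContinuousInv₀ G₀]
    {T : Set M} (hT : IsConnected T) {D : M → G₀} (hD : ContinuousOn D T)
    (hD0 : ∀ g ∈ T, D g ≠ 0) {s : G₀ → M} (hs : ContinuousOn s {0}ᶜ) (hs1 : s 1 = 1)
    (hsT : ∀ g ∈ T, ∀ a ≠ 0, g * s a ∈ T) (hDs : ∀ g ∈ T, ∀ a ≠ 0, D (g * s a) = D g * a) :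
    IsConnected {g ∈ T | D g = 1} := by
  have hinv : ∀ g ∈ T, (D g)⁻¹ ≠ 0 := fun g hg => inv_ne_zero (hD0 g hg)
  have himage : (fun g => g * s (D g)⁻¹) '' T = {g ∈ T | D g = 1} := by
    refine Set.Subset.antisymm ?_ fun g ⟨hg, hDg⟩ => ⟨g, hg, by simp [hDg, hs1]⟩
    rintro _ ⟨g, hg, rfl⟩
    exact ⟨hsT g hg _ (hinv g hg), by rw [hDs g hg _ (hinv g hg), mul_inv_cancel₀ (hD0 g hg)]⟩
  rw [← himage]
  exact hT.image _ <| continuousOn_id.mul <|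
    hs.comp (hD.inv₀ hD0) fun g hg => hinv g hg

section
variable {α : Type*} [PartialOrder α] {s : Set α}

theorem IsChain.exists_isLeast (hs : IsChain (· ≤ ·) s) (hfin : s.Finite) (hne : s.Nonempty) :
    ∃ a, IsLeast s a := by
  obtain ⟨a, ha⟩ := hfin.exists_minimal hne
  refine ⟨a, ha.prop, fun b hb => ?_⟩
  rcases hs.total ha.prop hb with hab | hba
  · exact hab
  · exact ha.le_of_le hb hba

theorem IsChain.exists_isGreatest (hs : IsChain (· ≤ ·) s) (hfin : s.Finite) (hne : s.Nonempty) :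
    ∃ a, IsGreatest s a := by
  obtain ⟨a, ha⟩ := hfin.exists_maximal hne
  refine ⟨a, ha.prop, fun b hb => ?_⟩
  rcases hs.total ha.prop hb with hab | hba
  · exact ha.le_of_ge hb hab
  · exact hba

end

namespace Submodule

variable {K V : Type*} [Field K] [AddCommGroup V] [Module K V] {U W : Submodule K V}

theorem exists_add_mem_of_not_le (hUW : IsCompl U W) {E : Submodule K V} (hEW : ¬E ≤ W) :
    ∃ v ∈ U, v ∉ W ∧ ∃ w ∈ W, v + w ∈ E ∧ (w = 0 ∨ w ∉ E) := by
  obtain ⟨x, hxE, hxW⟩ := SetLike.not_le_iff_exists.1 hEW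
  obtain ⟨v, w, hvU, hwW, rfl⟩ := codisjoint_iff_exists_add_eq.1 hUW.codisjoint x
  have hvW : v ∉ W := fun hvW => hxW (W.add_mem hvW hwW)
  by_cases hwE : w ∈ E
  · exact ⟨v, hvU, hvW, 0, W.zero_mem, by simpa using E.sub_mem hxE hwE, .inl rfl⟩
  · exact ⟨v, hvU, hvW, w, hwW, hxE, .inr hwE⟩

theorem exists_dual_apply_projection_eq (hUW : IsCompl U W) {F : Submodule K V} {v : V}
    (hvU : v ∈ U) (hvF : v ∉ F) :
    ∃ γ : Module.Dual K V, γ v = 1 ∧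
      ∀ z ∈ F, γ (U.projection W hUW z) = γ (W.projection U hUW.symm z) := by
  set πU := U.projection W hUW
  set πW := W.projection U hUW.symm
  have hvG : v ∉ F.map (πU - πW) := by
    rintro ⟨z, hzF, hz⟩
    have hπWz : πW z = πU z - v := by rw [← hz]; simp
    have hπWz0 : πW z = 0 := disjoint_def.1 hUW.disjoint _
      (hπWz ▸ U.sub_mem (projection_apply_mem _ z) hvU) (projection_apply_mem _ z)
    have hzv : z = v := by
      rw [← projection_add_projection_eq_self hUW z, ← sub_eq_zero, hπWz0, add_zero, ← hπWz,
        hπWz0]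
    exact hvF (hzv ▸ hzF)
  obtain ⟨f, hfv, hfG⟩ := exists_dual_map_eq_bot_of_notMem hvG inferInstance
  refine ⟨(f v)⁻¹ • f, inv_mul_cancel₀ hfv, fun z hz => ?_⟩
  have : f ((πU - πW) z) = 0 :=
    (Submodule.eq_bot_iff _).1 hfG _ (mem_map_of_mem (mem_map_of_mem hz))
  simp [sub_eq_zero.1 (by simpa using this)]

theorem exists_dual_smul_add_smul_mem_of_isChain (hUW : IsCompl U W) (hU : U ≠ ⊥)
    {C : Set (Submodule K V)} (hC : IsChain (· ≤ ·) C) (hCfin : C.Finite) (hbot : ⊥ ∈ C)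
    (htop : ⊤ ∈ C) :
    ∃ v ∈ U, ∃ w ∈ W, ∃ γ : Module.Dual K V, γ v = 1 ∧ γ w • w = w ∧
      ∀ E ∈ C, ∀ z ∈ E, γ (U.projection W hUW z) • v + γ (W.projection U hUW.symm z) • w ∈ E := by
  obtain ⟨E₀, ⟨hE₀C, hE₀W⟩, hE₀⟩ : ∃ E₀, IsLeast {E ∈ C | ¬E ≤ W} E₀ :=
    (hC.mono (Set.sep_subset _ _)).exists_isLeast (hCfin.subset (Set.sep_subset _ _))
      ⟨⊤, htop, fun h => hU (hUW.disjoint.eq_bot_of_le (le_top.trans h))⟩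
  obtain ⟨v, hvU, hvW, w, hwW, hvw, hw⟩ := exists_add_mem_of_not_le hUW hE₀W
  -- the members of `C` not below `F` contain both `v` and `w`
  obtain ⟨F, ⟨hFC, hFw⟩, hF⟩ : ∃ F, IsGreatest {E ∈ C | E ≤ W ∨ w ∉ E} F :=
    (hC.mono (Set.sep_subset _ _)).exists_isGreatest (hCfin.subset (Set.sep_subset _ _))
      ⟨⊥, hbot, .inl bot_le⟩
  have hvF : v ∉ F := fun hvF => by
    rcases hFw with hFW | hwF
    · exact hvW (hFW hvF)
    · exact hwF (by simpa using F.sub_mem (hE₀ ⟨hFC, fun h => hvW (h hvF)⟩ hvw) hvF)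
  obtain ⟨γ, hγv, hγF⟩ := exists_dual_apply_projection_eq hUW hvU hvF
  refine ⟨v, hvU, w, hwW, γ, hγv, ?_, fun E hE z hz => ?_⟩
  · rcases hw with rfl | hwE₀
    · simp
    · have := hγF _ (hF ⟨hE₀C, .inr hwE₀⟩ hvw)
      simp only [map_add, projection_apply_of_mem_left hUW hvU,
        projection_apply_of_mem_right hUW hwW, projection_apply_of_mem_right hUW.symm hvU,
        projection_apply_of_mem_left hUW.symm hwW, add_zero, zero_add, hγv] at this
      rw [← this, one_smul]
  by_cases hEF : E ≤ W ∨ w ∉ E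
  · rw [← hγF z (hF ⟨hE, hEF⟩ hz), ← smul_add]
    by_cases hEW : E ≤ W
    · rw [projection_apply_of_mem_right hUW (hEW hz), map_zero, zero_smul]
      exact E.zero_mem
    · exact E.smul_mem _ (hE₀ ⟨hE, hEW⟩ hvw)
  · obtain ⟨hEW, hwE⟩ : ¬E ≤ W ∧ w ∈ E := by simpa only [not_or, not_not] using hEF
    have hvE : v ∈ E := by simpa using E.sub_mem (hE₀ ⟨hE, hEW⟩ hvw) hwE
    exact E.add_mem (E.smul_mem _ hvE) (E.smul_mem _ hwE)

theorem exists_isIdempotentElem_of_isChain (hUW : IsCompl U W) (hU : U ≠ ⊥)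
    {C : Set (Submodule K V)} (hC : IsChain (· ≤ ·) C) (hCfin : C.Finite) (hbot : ⊥ ∈ C)
    (htop : ⊤ ∈ C) :
    ∃ e : Module.End K V, IsIdempotentElem e ∧ (∀ E ∈ C, ∀ z ∈ E, e z ∈ E) ∧
      (∀ z ∈ W, e z ∈ W) ∧ ∃ v ∈ U, ∃ α : Module.Dual K V, α v = 1 ∧ ∀ u ∈ U, e u = α u • v := by
  obtain ⟨v, hvU, w, hwW, γ, hγv, hγw, hCe⟩ :=
    exists_dual_smul_add_smul_mem_of_isChain hUW hU hC hCfin hbot htop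
  set πU := U.projection W hUW
  set πW := W.projection U hUW.symm
  have hπ : πU v = v ∧ πW v = 0 ∧ πU w = 0 ∧ πW w = w :=
    ⟨projection_apply_of_mem_left hUW hvU, projection_apply_of_mem_right hUW.symm hvU,
      projection_apply_of_mem_right hUW hwW, projection_apply_of_mem_left hUW.symm hwW⟩
  set e : Module.End K V := (γ ∘ₗ πU).smulRight v + (γ ∘ₗ πW).smulRight w
  have he (z : V) : e z = γ (πU z) • v + γ (πW z) • w := rfl
  refine ⟨e, LinearMap.ext fun z => ?_, hCe, fun z hz => ?_, v, hvU, γ, hγv, fun u hu => ?_⟩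
  · simp only [Module.End.mul_apply, he, map_add, map_smul, hπ, smul_zero, add_zero, zero_add,
      smul_eq_mul, hγv, mul_one, mul_smul, hγw]
  · rw [he, projection_apply_of_mem_right hUW hz, map_zero, zero_smul, zero_add]
    exact W.smul_mem _ hwW
  · rw [he, projection_apply_of_mem_left hUW hu, projection_apply_of_mem_right hUW.symm hu,
      map_zero, zero_smul, add_zero]

end Submodule

theorem IsIdempotentElem.isUnit_one_add_sub_one_smul {K A : Type*} [Field K] [Ring A]
    [Algebra K A] {e : A} (he : IsIdempotentElem e) {a : K} (ha : a ≠ 0) :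
    IsUnit (1 + (a - 1) • e) := by
  have key (b c : K) (hbc : b * c = 1) : (1 + (b - 1) • e) * (1 + (c - 1) • e) = 1 := by
    simp only [mul_add, add_mul, one_mul, mul_one, smul_mul_smul_comm, he.eq]
    linear_combination (norm := module) hbc • e
  exact ⟨⟨_, _, key a a⁻¹ (mul_inv_cancel₀ ha), key a⁻¹ a (inv_mul_cancel₀ ha)⟩, rfl⟩

section
variable {ι K : Type*} [Fintype ι] [DecidableEq ι]

def Matrix.stabilizerSubalgebra [CommRing K] (C : Set (Submodule K (ι → K))) :
    Subalgebra K (Matrix ι ι K) where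
  carrier := {g | ∀ p ∈ C, ∀ z ∈ p, g *ᵥ z ∈ p}
  mul_mem' {g h} hg hh p hp z hz := by
    rw [← Matrix.mulVec_mulVec]
    exact hg p hp _ (hh p hp z hz)
  add_mem' {g h} hg hh p hp z hz := by
    rw [Matrix.add_mulVec]
    exact p.add_mem (hg p hp z hz) (hh p hp z hz)
  algebraMap_mem' c p _ z hz := by
    rw [Algebra.algebraMap_eq_smul_one, Matrix.smul_mulVec, Matrix.one_mulVec]
    exact p.smul_mem c hz

theorem Matrix.mem_stabilizerSubalgebra [CommRing K] {C : Set (Submodule K (ι → K))}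
    {g : Matrix ι ι K} : g ∈ stabilizerSubalgebra C ↔ ∀ p ∈ C, ∀ z ∈ p, g *ᵥ z ∈ p :=
  Iff.rfl

theorem Matrix.map_toLin'_eq_self_iff [Field K] {g : Matrix ι ι K} (hg : IsUnit g.det)
    {p : Submodule K (ι → K)} : p.map (toLin' g) = p ↔ ∀ z ∈ p, g *ᵥ z ∈ p := by
  refine ⟨fun h z hz => h ▸ Submodule.mem_map_of_mem hz, fun h => ?_⟩
  have hinj : Function.Injective (toLin' g) :=
    mulVec_injective_iff_isUnit.2 ((isUnit_iff_isUnit_det g).2 hg)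
  exact Submodule.eq_of_le_of_finrank_eq (Submodule.map_le_iff_le_comap.2 h)
    (Submodule.equivMapOfInjective _ hinj p).finrank_eq.symm

end

section
variable {m n : ℕ}

theorem sum_single_castAdd_mem_stdU (x : Fin (m + n) → ℂ) :
    ∑ i : Fin m, Pi.single (Fin.castAdd n i) (x (Fin.castAdd n i)) ∈ stdU m n :=
  Submodule.sum_mem _ fun i _ => by
    simpa [← Pi.single_smul'] using (stdU m n).smul_mem (x (Fin.castAdd n i))
      (Submodule.subset_span ⟨i, rfl⟩)

theorem sum_single_natAdd_mem_stdW (x : Fin (m + n) → ℂ) :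
    ∑ i : Fin n, Pi.single (Fin.natAdd m i) (x (Fin.natAdd m i)) ∈ stdW m n :=
  Submodule.sum_mem _ fun i _ => by
    simpa [← Pi.single_smul'] using (stdW m n).smul_mem (x (Fin.natAdd m i))
      (Submodule.subset_span ⟨i, rfl⟩)

theorem sum_single_castAdd_add_sum_single_natAdd (x : Fin (m + n) → ℂ) :
    ∑ i : Fin m, Pi.single (Fin.castAdd n i) (x (Fin.castAdd n i)) +
      ∑ i : Fin n, Pi.single (Fin.natAdd m i) (x (Fin.natAdd m i)) = x := by
  rw [← Fin.sum_univ_add (f := fun i => Pi.single i (x i)), Finset.univ_sum_single]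

theorem mem_stdU_iff {x : Fin (m + n) → ℂ} :
    x ∈ stdU m n ↔ ∀ i : Fin n, x (Fin.natAdd m i) = 0 := by
  refine ⟨fun hx i => ?_, fun hx => ?_⟩
  · induction hx using Submodule.span_induction with
    | mem y hy =>
      obtain ⟨j, rfl⟩ := hy
      exact Pi.single_eq_of_ne (by simp [Fin.ext_iff]; omega) _
    | zero => rfl
    | add y z _ _ hy hz => simp [hy, hz]
    | smul c y _ hy => simp [hy]
  · rw [← sum_single_castAdd_add_sum_single_natAdd x]
    simpa [hx] using sum_single_castAdd_mem_stdU x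

theorem mem_stdW_iff {x : Fin (m + n) → ℂ} :
    x ∈ stdW m n ↔ ∀ i : Fin m, x (Fin.castAdd n i) = 0 := by
  refine ⟨fun hx i => ?_, fun hx => ?_⟩
  · induction hx using Submodule.span_induction with
    | mem y hy =>
      obtain ⟨j, rfl⟩ := hy
      exact Pi.single_eq_of_ne (by simp [Fin.ext_iff]; omega) _
    | zero => rfl
    | add y z _ _ hy hz => simp [hy, hz]
    | smul c y _ hy => simp [hy]
  · rw [← sum_single_castAdd_add_sum_single_natAdd x]
    simpa [hx] using sum_single_natAdd_mem_stdW x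

theorem isCompl_stdU_stdW : IsCompl (stdU m n) (stdW m n) := by
  refine ⟨Submodule.disjoint_def.2 fun x hU hW => funext fun j => ?_,
    Submodule.codisjoint_iff_exists_add_eq.2 fun x => ⟨_, _, sum_single_castAdd_mem_stdU x,
      sum_single_natAdd_mem_stdW x, sum_single_castAdd_add_sum_single_natAdd x⟩⟩
  induction j using Fin.addCases with
  | left j => exact mem_stdW_iff.1 hW j
  | right j => exact mem_stdU_iff.1 hU j

theorem stdU_ne_bot (hm : m ≠ 0) : stdU m n ≠ ⊥ := by
  refine (Submodule.ne_bot_iff _).2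
    ⟨_, Submodule.subset_span ⟨⟨0, Nat.pos_of_ne_zero hm⟩, rfl⟩, ?_⟩
  simp

theorem apply_natAdd_castAdd_eq_zero {g : Matrix (Fin (m + n)) (Fin (m + n)) ℂ}
    (hg : ∀ z ∈ stdU m n, g *ᵥ z ∈ stdU m n) (i : Fin n) (j : Fin m) :
    g (Fin.natAdd m i) (Fin.castAdd n j) = 0 := by
  simpa [Matrix.mulVec_single] using mem_stdU_iff.1 (hg _ (Submodule.subset_span ⟨j, rfl⟩)) i

theorem sum_single_castAdd_eq_self {x : Fin (m + n) → ℂ} (hx : x ∈ stdU m n) :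
    ∑ i : Fin m, Pi.single (Fin.castAdd n i) (x (Fin.castAdd n i)) = x := by
  conv_rhs => rw [← sum_single_castAdd_add_sum_single_natAdd x]
  simp [mem_stdU_iff.1 hx]

variable {R : Type*} [CommRing R]

/-- When `g` preserves `stdU m n`, this block is the matrix of `g|_U` in the standard basis. -/
def detU (g : Matrix (Fin (m + n)) (Fin (m + n)) R) : R :=
  (g.submatrix (Fin.castAdd n) (Fin.castAdd n)).det

theorem det_eq_detU_mul {g : Matrix (Fin (m + n)) (Fin (m + n)) R}
    (hg : ∀ i j, g (Fin.natAdd m i) (Fin.castAdd n j) = 0) :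
    g.det = detU g * (g.submatrix (Fin.natAdd m) (Fin.natAdd m)).det := by
  rw [← Matrix.det_submatrix_equiv_self finSumFinEquiv, detU, ← Matrix.det_fromBlocks_zero₂₁
    _ (g.submatrix (Fin.castAdd n) (Fin.natAdd m))]
  congr 1
  ext (i | i) (j | j) <;> simp [hg]

theorem detU_mul (g : Matrix (Fin (m + n)) (Fin (m + n)) R)
    {h : Matrix (Fin (m + n)) (Fin (m + n)) R}
    (hh : ∀ i j, h (Fin.natAdd m i) (Fin.castAdd n j) = 0) :
    detU (g * h) = detU g * detU h := by
  rw [detU, detU, detU, ← Matrix.det_mul]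
  congr 1
  ext i j
  simp [Matrix.mul_apply, Fin.sum_univ_add, hh]

theorem continuous_detU : Continuous (detU : Matrix (Fin (m + n)) (Fin (m + n)) ℂ → ℂ) :=
  (continuous_id.matrix_submatrix _ _).matrix_det

theorem detU_one_add_smul_toMatrix' {e : Module.End ℂ (Fin (m + n) → ℂ)}
    {v : Fin (m + n) → ℂ} (hv : v ∈ stdU m n) {α : Module.Dual ℂ (Fin (m + n) → ℂ)}
    (hαv : α v = 1) (he : ∀ u ∈ stdU m n, e u = α u • v) (a : ℂ) :
    detU (1 + a • LinearMap.toMatrix' e) = 1 + a := by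
  set col := fun i : Fin m => a * v (Fin.castAdd n i)
  set row := fun j : Fin m => α (Pi.single (Fin.castAdd n j) 1)
  have hblock : (1 + a • LinearMap.toMatrix' e).submatrix (Fin.castAdd n) (Fin.castAdd n) =
      1 + replicateCol Unit col * replicateRow Unit row := by
    ext i j
    simp only [submatrix_apply, Matrix.add_apply, one_apply, Fin.castAdd_inj, Matrix.smul_apply,
      LinearMap.toMatrix'_apply, he _ (Submodule.subset_span ⟨j, rfl⟩), Pi.smul_apply, smul_eq_mul,
      mul_apply, Finset.univ_unique, PUnit.default_eq_unit, replicateCol_apply, replicateRow_apply,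
      Finset.sum_const, Finset.card_singleton, one_smul, col, row]
    ring
  have hα_single (j : Fin (m + n)) (r : ℂ) : α (Pi.single j r) = r * α (Pi.single j 1) := by
    rw [← smul_eq_mul, ← map_smul, ← Pi.single_smul', smul_eq_mul, mul_one]
  have hdot : row ⬝ᵥ col = a := calc
    row ⬝ᵥ col = a * ∑ i : Fin m, α (Pi.single (Fin.castAdd n i) (v (Fin.castAdd n i))) := by
      simp only [dotProduct, row, col, hα_single _ (v _), Finset.mul_sum]
      exact Finset.sum_congr rfl fun i _ => by ring
    _ = a := by rw [← map_sum, sum_single_castAdd_eq_self hv, hαv, mul_one]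
  rw [detU, hblock, det_one_add_replicateCol_mul_replicateRow, hdot]

theorem exists_isIdempotentElem_detU_one_add_smul (hm : m ≠ 0) {k : ℕ}
    {Wc : Fin (k + 1) → Submodule ℂ (Fin (m + n) → ℂ)} (hmono : Monotone Wc) (hbot : Wc 0 = ⊥)
    (htop : Wc (Fin.last k) = ⊤) :
    ∃ P ∈ stabilizerSubalgebra ({stdU m n, stdW m n} ∪ Set.range Wc),
      IsIdempotentElem P ∧ ∀ a : ℂ, detU (1 + a • P) = 1 + a := by
  obtain ⟨e, he, heC, heW, v, hv, α, hαv, heU⟩ := Submodule.exists_isIdempotentElem_of_isChain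
    isCompl_stdU_stdW (stdU_ne_bot hm) hmono.isChain_range (Set.finite_range Wc) ⟨0, hbot⟩
    ⟨Fin.last k, htop⟩
  refine ⟨LinearMap.toMatrix' e, ?_, by rw [IsIdempotentElem, ← LinearMap.toMatrix'_mul, he.eq],
    detU_one_add_smul_toMatrix' hv hαv heU⟩
  rintro p ((rfl | rfl) | ⟨j, rfl⟩) z hz <;> rw [LinearMap.toMatrix'_mulVec]
  · rw [heU z hz]
    exact (stdU m n).smul_mem _ hv
  · exact heW z hz
  · exact heC _ ⟨j, rfl⟩ z hz

theorem setOf_eq_stabilizerSubalgebra {k : ℕ}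
    (Wc : Fin (k + 1) → Submodule ℂ (Fin (m + n) → ℂ)) :
    {g : Matrix (Fin (m + n)) (Fin (m + n)) ℂ | IsUnit g.det ∧
      (stdU m n).map (toLin' g) = stdU m n ∧ (stdW m n).map (toLin' g) = stdW m n ∧
      (g.submatrix (Fin.castAdd n) (Fin.castAdd n)).det = 1 ∧
      ∀ j : Fin (k + 1), (Wc j).map (toLin' g) = Wc j} =
    {g | (g ∈ stabilizerSubalgebra ({stdU m n, stdW m n} ∪ Set.range Wc) ∧ IsUnit g.det) ∧
      detU g = 1} := by
  ext g
  by_cases hg : IsUnit g.det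
  · simp only [Set.mem_ofPred_eq, map_toLin'_eq_self_iff hg, mem_stabilizerSubalgebra,
      Set.mem_union, Set.mem_insert_iff, Set.mem_singleton_iff, Set.mem_range, or_imp,
      forall_exists_index, forall_and, forall_eq, forall_apply_eq_imp_iff, detU]
    tauto
  · simp only [Set.mem_ofPred_eq, hg, false_and, and_false]

end

/-- The subgroup `SL(m) × GL(n) ⊂ GL(m+n)` is parabolically connected: its intersection with
the stabilizer of any chain of subspaces of `ℂ^{m+n}` is connected. Here `det(g|_U) = 1` is
expressed via the determinant of the top-left `m × m` block, which represents `g|_U` in the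
standard basis of `U` when `g` preserves `U` and `W`. -/
theorem slgl_parabolically_connected (m n : ℕ) :
    ∀ (k : ℕ) (Wc : Fin (k + 1) → Submodule ℂ (Fin (m + n) → ℂ)),
      Monotone Wc → Wc 0 = ⊥ → Wc (Fin.last k) = ⊤ →
      IsConnected {g : Matrix (Fin (m + n)) (Fin (m + n)) ℂ |
        IsUnit g.det ∧
        (stdU m n).map (Matrix.toLin' g) = stdU m n ∧
        (stdW m n).map (Matrix.toLin' g) = stdW m n ∧
        (g.submatrix (Fin.castAdd n) (Fin.castAdd n)).det = 1 ∧
        ∀ j : Fin (k + 1), (Wc j).map (Matrix.toLin' g) = Wc j} := by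
  intro k Wc hmono hbot htop
  set A := stabilizerSubalgebra ({stdU m n, stdW m n} ∪ Set.range Wc)
  have hT : IsConnected {g | g ∈ A ∧ IsUnit g.det} :=
    ⟨⟨1, A.one_mem, by simp⟩, A.toSubmodule.isPreconnected_setOf_isUnit_det⟩
  have hA : ∀ g ∈ A, ∀ i j, g (Fin.natAdd m i) (Fin.castAdd n j) = 0 :=
    fun g hg => apply_natAdd_castAdd_eq_zero (hg _ (by simp))
  rw [setOf_eq_stabilizerSubalgebra]
  rcases eq_or_ne m 0 with rfl | hm
  · simpa [detU] using hT
  obtain ⟨P, hPA, hP, hdetU⟩ := exists_isIdempotentElem_detU_one_add_smul hm hmono hbot htop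
  have hsA (a : ℂ) : 1 + (a - 1) • P ∈ A := A.add_mem A.one_mem (A.smul_mem hPA _)
  refine hT.sep_eq_one_of_mul_section continuous_detU.continuousOn (fun g hg => ?_)
    (s := fun a => 1 + (a - 1) • P) (by fun_prop : Continuous _).continuousOn (by simp)
    (fun g hg a ha => ⟨A.mul_mem hg.1 (hsA a), ?_⟩) (fun g hg a _ => ?_)
  · exact left_ne_zero_of_mul (det_eq_detU_mul (hA g hg.1) ▸ hg.2.ne_zero)
  · rw [det_mul]
    exact hg.2.mul ((isUnit_iff_isUnit_det _).1 (hP.isUnit_one_add_sub_one_smul ha))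
  · rw [detU_mul g (hA _ (hsA a)), hdetU, add_sub_cancel]
end

section
/- Let n ≥ 2. The set of upper-triangular n×n complex matrices g satisfying gᵀ·g = 1 and det(g) = 1 is finite and is not a connected subset of the space of n×n complex matrices. (Consequently, the subgroup SO(n) ⊂ SL(n) is not parabolically connected.) -/
/-!
An upper-triangular orthogonal matrix `g` has the upper-triangular inverse `gᵀ`, which is also
lower triangular, so `g` is diagonal with entries `±1`. Hence the intersection is finite; it
contains both `1` and `diag(-1, -1, 1, …, 1)`, and a finite set with at least two points in a `T1` space
is not connected.
-/

open Matrix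

namespace Matrix

variable {m R : Type*} [Fintype m] [LinearOrder m] [CommRing R]

theorem BlockTriangular.isDiag_of_transpose_mul_self_eq_one {g : Matrix m m R}
    (hg : g.BlockTriangular id) (h : gᵀ * g = 1) : g.IsDiag := by
  have : Invertible g := invertibleOfLeftInverse g gᵀ h
  have hgT : gᵀ.BlockTriangular id := inv_eq_left_inv h ▸ blockTriangular_inv_of_blockTriangular hg
  intro i j hij
  rcases hij.lt_or_gt with hlt | hgt
  · exact hgT hlt
  · exact hg hgt

theorem diagonal_transpose_mul_self_eq_one_iff {d : m → R} :
    (diagonal d)ᵀ * diagonal d = 1 ↔ ∀ i, d i * d i = 1 := by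
  rw [diagonal_transpose, diagonal_mul_diagonal, ← diagonal_one, diagonal_eq_diagonal_iff]

theorem blockTriangular_and_transpose_mul_self_eq_one_iff {g : Matrix m m R} :
    g.BlockTriangular id ∧ gᵀ * g = 1 ↔ ∃ d : m → R, (∀ i, d i * d i = 1) ∧ g = diagonal d := by
  constructor
  · rintro ⟨hg, h⟩
    have hdiag := (hg.isDiag_of_transpose_mul_self_eq_one h).diagonal_diag
    refine ⟨g.diag, ?_, hdiag.symm⟩
    rwa [← diagonal_transpose_mul_self_eq_one_iff, hdiag]
  · rintro ⟨d, hd, rfl⟩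
    exact ⟨blockTriangular_diagonal d, diagonal_transpose_mul_self_eq_one_iff.mpr hd⟩

theorem finite_setOf_blockTriangular_and_transpose_mul_self_eq_one [NoZeroDivisors R] :
    {g : Matrix m m R | g.BlockTriangular id ∧ gᵀ * g = 1}.Finite := by
  refine ((Set.Finite.pi fun _ => Set.toFinite {1, -1}).image diagonal).subset ?_
  intro g hg
  obtain ⟨d, hd, rfl⟩ := blockTriangular_and_transpose_mul_self_eq_one_iff.mp hg
  exact ⟨d, fun i _ => mul_self_eq_one_iff.mp (hd i), rfl⟩

theorem exists_ne_one_blockTriangular_transpose_mul_self_eq_one_det_eq_one (h : (-1 : R) ≠ 1) (k : ℕ) :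
    ∃ g : Matrix (Fin (k + 2)) (Fin (k + 2)) R,
      g ≠ 1 ∧ g.BlockTriangular id ∧ gᵀ * g = 1 ∧ g.det = 1 := by
  refine ⟨diagonal (Fin.cons (-1) (Fin.cons (-1) 1)), fun hg => h (by simpa using congrFun₂ hg 0 0),
    blockTriangular_diagonal _, diagonal_transpose_mul_self_eq_one_iff.mpr fun i => ?_, ?_⟩
  · exact Fin.cases (by simp) (fun j => Fin.cases (by simp) (fun _ => by simp) j) i
  · simp [det_diagonal, Fin.prod_cons]

end Matrix

/-- For `n ≥ 2`, the intersection of `SO(n, ℂ)` with the Borel subgroup of upper-triangular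
matrices in `SL(n, ℂ)` is finite and not connected; hence `SO(n) ⊂ SL(n)` is not
parabolically connected. -/
theorem so_not_parabolically_connected (n : ℕ) (hn : 2 ≤ n) :
    ({g : Matrix (Fin n) (Fin n) ℂ |
        g.BlockTriangular id ∧ gᵀ * g = 1 ∧ g.det = 1}).Finite ∧
    ¬ IsConnected {g : Matrix (Fin n) (Fin n) ℂ |
        g.BlockTriangular id ∧ gᵀ * g = 1 ∧ g.det = 1} := by
  have hfin : ({g : Matrix (Fin n) (Fin n) ℂ |
      g.BlockTriangular id ∧ gᵀ * g = 1 ∧ g.det = 1}).Finite :=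
    finite_setOf_blockTriangular_and_transpose_mul_self_eq_one.subset fun g hg => ⟨hg.1, hg.2.1⟩
  refine ⟨hfin, fun hconn => ?_⟩
  obtain ⟨k, rfl⟩ : ∃ k, n = k + 2 := ⟨n - 2, by omega⟩
  obtain ⟨g, hg1, hg⟩ :=
    exists_ne_one_blockTriangular_transpose_mul_self_eq_one_det_eq_one (by norm_num : (-1 : ℂ) ≠ 1) k
  exact hconn.isPreconnected.infinite_of_nontrivial
    ⟨g, hg, 1, ⟨blockTriangular_one, by simp, by simp⟩, hg1⟩ hfin
end

section
/- Let n ≥ 1 and N = 2n. Let e₁,…,e_{2n} be the standard basis of ℂ^{2n}, U = span{e₁,…,e_n}, W = span{e_{n+1},…,e_{2n}}. Define the full flag V₀ = 0, V_i = span{e₁+e_{n+1},…,e_i+e_{n+i}} for 1 ≤ i ≤ n, and V_{n+i} = V_n + span{e₁,…,e_i} for 1 ≤ i ≤ n. Then the set H = {g ∈ GL(2n,ℂ) : det(g) = 1, g(U) = U, g(W) = W, and g(V_i) = V_i for all i = 0,…,2n} is not a connected subset of the space of 2n×2n complex matrices. (Consequently, the subgroup S(GL(n)×GL(n)) ⊂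 SL(2n) is not parabolically connected.) -/
/-!
Preserving `U` and `W` makes `g` block diagonal, `g = diag(A, D)`; preserving
`V_n = {(x, x)}` then forces `A = D`, so `1 = det g = (det A)²`. Thus `g ↦ det A` is a
continuous function on `H` with values in `{1, -1}`, and it takes both values: at the identity and
at `diag(s, s)` with `s = diag(-1, 1, …, 1)`.
-/

/-- The coordinate subspace `U = span{e₁,…,eₙ}` of `ℂ^{2n}`. -/
noncomputable def stdU' (n : ℕ) : Submodule ℂ (Fin (n + n) → ℂ) :=
  Submodule.span ℂ (Set.range fun i : Fin n => (Pi.single (Fin.castAdd n i) 1 : Fin (n + n) → ℂ))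

/-- The coordinate subspace `W = span{e_{n+1},…,e_{2n}}` of `ℂ^{2n}`. -/
noncomputable def stdW' (n : ℕ) : Submodule ℂ (Fin (n + n) → ℂ) :=
  Submodule.span ℂ (Set.range fun i : Fin n => (Pi.single (Fin.natAdd n i) 1 : Fin (n + n) → ℂ))

/-- The full flag `V_j = span{e₁+e_{n+1},…,e_j+e_{n+j}}` for `j ≤ n` and
`V_{n+j} = V_n + span{e₁,…,e_j}` for `1 ≤ j ≤ n`. -/
noncomputable def badFlag (n : ℕ) (j : Fin (n + n + 1)) : Submodule ℂ (Fin (n + n) → ℂ) :=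
  Submodule.span ℂ
    (((fun i : Fin n => (Pi.single (Fin.castAdd n i) 1 : Fin (n + n) → ℂ) +
        Pi.single (Fin.natAdd n i) 1) '' {i : Fin n | (i : ℕ) < (j : ℕ)}) ∪
     ((fun i : Fin n => (Pi.single (Fin.castAdd n i) 1 : Fin (n + n) → ℂ)) ''
        {i : Fin n | (i : ℕ) + n < (j : ℕ)}))

open Matrix

lemma Submodule.map_span_eq_self_of_forall_smul {K M : Type*} [DivisionRing K] [AddCommGroup M]
    [Module K M] (f : M →ₗ[K] M) (s : Set M) (h : ∀ x ∈ s, ∃ c : K, c ≠ 0 ∧ f x = c • x) :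
    (span K s).map f = span K s := by
  rw [map_span]
  refine le_antisymm (span_le.2 ?_) (span_le.2 fun x hx => ?_)
  · rintro _ ⟨x, hx, rfl⟩
    obtain ⟨c, -, hfx⟩ := h x hx
    exact hfx ▸ smul_mem _ _ (subset_span hx)
  · obtain ⟨c, hc, hfx⟩ := h x hx
    have hx' : x = c⁻¹ • f x := by rw [hfx, smul_smul, inv_mul_cancel₀ hc, one_smul]
    exact hx' ▸ smul_mem _ _ (subset_span ⟨x, hx, rfl⟩)

lemma apply_eq_zero_of_mem_span_range_single {ι κ R : Type*} [Semiring R] [DecidableEq ι]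
    {e : κ → ι} {v : ι → R} (hv : v ∈ Submodule.span R (Set.range fun k => Pi.single (e k) 1))
    {i : ι} (hi : ∀ k, e k ≠ i) : v i = 0 := by
  have hle : Submodule.span R (Set.range fun k => (Pi.single (e k) 1 : ι → R)) ≤
      LinearMap.ker (LinearMap.proj i) := by
    rw [Submodule.span_le]
    rintro _ ⟨k, rfl⟩
    simp [(hi k).symm]
  exact hle hv

lemma Fin.castAdd_ne_natAdd {m n : ℕ} (i : Fin m) (j : Fin n) : castAdd n i ≠ natAdd m j := by
  simp only [ne_eq, Fin.ext_iff, val_castAdd, val_natAdd]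
  omega

lemma Matrix.det_eq_det_mul_det_of_castAdd_natAdd_eq_zero {R : Type*} [CommRing R] {m n : ℕ}
    {g : Matrix (Fin (m + n)) (Fin (m + n)) R}
    (h : ∀ i j, g (Fin.castAdd n i) (Fin.natAdd m j) = 0) :
    g.det = (g.submatrix (Fin.castAdd n) (Fin.castAdd n)).det *
      (g.submatrix (Fin.natAdd m) (Fin.natAdd m)).det := by
  have hblocks : g.submatrix finSumFinEquiv finSumFinEquiv =
      fromBlocks (g.submatrix (Fin.castAdd n) (Fin.castAdd n)) 0
        (g.submatrix (Fin.natAdd m) (Fin.castAdd n))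
        (g.submatrix (Fin.natAdd m) (Fin.natAdd m)) := by
    ext (i | i) (j | j) <;> simp [h]
  rw [← det_submatrix_equiv_self finSumFinEquiv, hblocks, det_fromBlocks_zero₁₂]

def sglglFlagStabilizer (n : ℕ) : Set (Matrix (Fin (n + n)) (Fin (n + n)) ℂ) :=
  {g | g.det = 1 ∧
    (stdU' n).map (toLin' g) = stdU' n ∧
    (stdW' n).map (toLin' g) = stdW' n ∧
    ∀ j : Fin (n + n + 1), (badFlag n j).map (toLin' g) = badFlag n j}

noncomputable def upperLeftDet (n : ℕ) (g : Matrix (Fin (n + n)) (Fin (n + n)) ℂ) : ℂ :=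
  (g.submatrix (Fin.castAdd n) (Fin.castAdd n)).det

lemma continuous_upperLeftDet (n : ℕ) : Continuous (upperLeftDet n) :=
  (continuous_id.matrix_submatrix _ _).matrix_det

lemma apply_castAdd_eq_apply_natAdd_of_mem_badFlag {n : ℕ} {j : Fin (n + n + 1)}
    (hj : (j : ℕ) ≤ n) {v : Fin (n + n) → ℂ} (hv : v ∈ badFlag n j) (i : Fin n) :
    v (Fin.castAdd n i) = v (Fin.natAdd n i) := by
  have hle : badFlag n j ≤ LinearMap.ker
      (LinearMap.proj (R := ℂ) (φ := fun _ => ℂ) (Fin.castAdd n i) -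
        LinearMap.proj (Fin.natAdd n i)) := by
    rw [badFlag, Submodule.span_le]
    rintro _ (⟨k, -, rfl⟩ | ⟨k, hk, rfl⟩)
    · simp only [SetLike.mem_coe, LinearMap.mem_ker, LinearMap.sub_apply, LinearMap.proj_apply,
        Pi.add_apply, Pi.single_apply, Fin.castAdd_inj, Fin.natAdd_inj, Fin.castAdd_ne_natAdd,
        (Fin.castAdd_ne_natAdd _ _).symm, if_false, add_zero, zero_add, sub_self]
    · exact absurd hk (by simp only [Set.mem_ofPred_eq]; omega)
  simpa [sub_eq_zero] using hle hv

section Blocks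

variable {n : ℕ} {g : Matrix (Fin (n + n)) (Fin (n + n)) ℂ}

lemma apply_natAdd_castAdd_eq_zero_s13 (hU : (stdU' n).map (toLin' g) = stdU' n) (i j : Fin n) :
    g (Fin.natAdd n i) (Fin.castAdd n j) = 0 := by
  have hmem : toLin' g (Pi.single (Fin.castAdd n j) 1) ∈ stdU' n :=
    hU ▸ Submodule.mem_map_of_mem (Submodule.subset_span ⟨j, rfl⟩)
  simpa [mulVec_single_one] using
    apply_eq_zero_of_mem_span_range_single hmem fun k => Fin.castAdd_ne_natAdd k i

lemma apply_castAdd_natAdd_eq_zero (hW : (stdW' n).map (toLin' g) = stdW' n) (i j : Fin n) :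
    g (Fin.castAdd n i) (Fin.natAdd n j) = 0 := by
  have hmem : toLin' g (Pi.single (Fin.natAdd n j) 1) ∈ stdW' n :=
    hW ▸ Submodule.mem_map_of_mem (Submodule.subset_span ⟨j, rfl⟩)
  simpa [mulVec_single_one] using
    apply_eq_zero_of_mem_span_range_single hmem fun k => (Fin.castAdd_ne_natAdd i k).symm

lemma apply_castAdd_castAdd_eq_apply_natAdd_natAdd (hg : g ∈ sglglFlagStabilizer n)
    (i j : Fin n) :
    g (Fin.castAdd n i) (Fin.castAdd n j) = g (Fin.natAdd n i) (Fin.natAdd n j) := by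
  obtain ⟨-, hU, hW, hF⟩ := hg
  let Vn : Fin (n + n + 1) := ⟨n, by omega⟩
  have hgen : (Pi.single (Fin.castAdd n j) 1 + Pi.single (Fin.natAdd n j) 1 : Fin (n + n) → ℂ) ∈
      badFlag n Vn :=
    Submodule.subset_span (Or.inl ⟨j, j.isLt, rfl⟩)
  have hmem := hF Vn ▸ Submodule.mem_map_of_mem (f := toLin' g) hgen
  have key := apply_castAdd_eq_apply_natAdd_of_mem_badFlag le_rfl hmem i
  simpa only [toLin'_apply, mulVec_add, mulVec_single_one, Pi.add_apply, col_apply,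
    apply_natAdd_castAdd_eq_zero_s13 hU, apply_castAdd_natAdd_eq_zero hW, add_zero, zero_add] using key

lemma upperLeftDet_sq_eq_one (hg : g ∈ sglglFlagStabilizer n) : upperLeftDet n g ^ 2 = 1 := by
  have hdiag : g.submatrix (Fin.natAdd n) (Fin.natAdd n) =
      g.submatrix (Fin.castAdd n) (Fin.castAdd n) := by
    ext i j
    exact (apply_castAdd_castAdd_eq_apply_natAdd_natAdd hg i j).symm
  rw [← hg.1, det_eq_det_mul_det_of_castAdd_natAdd_eq_zero (apply_castAdd_natAdd_eq_zero hg.2.2.1),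
    hdiag, sq, upperLeftDet]

end Blocks

lemma upperLeftDet_diagonal_append {n : ℕ} (a b : Fin n → ℂ) :
    upperLeftDet n (diagonal (Fin.append a b)) = ∏ i, a i := by
  rw [upperLeftDet, submatrix_diagonal _ _ (Fin.castAdd_injective _ _), det_diagonal]
  simp only [Function.comp_apply, Fin.append_left]

lemma diagonal_append_self_mem_sglglFlagStabilizer {n : ℕ} (a : Fin n → ℂ)
    (ha : (∏ i, a i) ^ 2 = 1) : diagonal (Fin.append a a) ∈ sglglFlagStabilizer n := by
  have ha0 : ∀ i, a i ≠ 0 := fun i hi => by simp [Finset.prod_eq_zero (Finset.mem_univ i) hi] at ha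
  have hsingle : ∀ k, toLin' (diagonal (Fin.append a a)) (Pi.single k 1) =
      Fin.append a a k • Pi.single k 1 := fun k => by
    rw [toLin'_apply, diagonal_mulVec_single, ← smul_eq_mul, Pi.single_smul']
  refine ⟨?_, ?_, ?_, fun j => ?_⟩
  · simpa only [det_diagonal, Fin.prod_univ_add, Fin.append_left, Fin.append_right, sq] using ha
  all_goals apply Submodule.map_span_eq_self_of_forall_smul
  · rintro _ ⟨k, rfl⟩
    exact ⟨a k, ha0 k, by rw [hsingle, Fin.append_left]⟩
  · rintro _ ⟨k, rfl⟩
    exact ⟨a k, ha0 k, by rw [hsingle, Fin.append_right]⟩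
  · rintro _ (⟨k, -, rfl⟩ | ⟨k, -, rfl⟩)
    · refine ⟨a k, ha0 k, ?_⟩
      rw [map_add, hsingle, hsingle, Fin.append_left, Fin.append_right, smul_add]
    · exact ⟨a k, ha0 k, by rw [hsingle, Fin.append_left]⟩

/-- The subgroup `S(GL(n) × GL(n)) ⊂ SL(2n)` is not parabolically connected: its intersection
with the stabilizer of the full flag `badFlag` (a Borel subgroup of `SL(2n, ℂ)`) is not
connected. -/
theorem sglgl_equal_not_parabolically_connected (n : ℕ) (hn : 1 ≤ n) :
    ¬ IsConnected {g : Matrix (Fin (n + n)) (Fin (n + n)) ℂ |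
        g.det = 1 ∧
        (stdU' n).map (Matrix.toLin' g) = stdU' n ∧
        (stdW' n).map (Matrix.toLin' g) = stdW' n ∧
        ∀ j : Fin (n + n + 1), (badFlag n j).map (Matrix.toLin' g) = badFlag n j} := by
  intro hC
  let sign : Fin n → ℂ := Pi.mulSingle ⟨0, hn⟩ (-1)
  have hminus := diagonal_append_self_mem_sglglFlagStabilizer sign (by simp [sign])
  have hplus := diagonal_append_self_mem_sglglFlagStabilizer (1 : Fin n → ℂ) (by simp)
  have hcont : Continuous fun g => (upperLeftDet n g).re :=
    Complex.continuous_re.comp (continuous_upperLeftDet n)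
  obtain ⟨g, hg, hg0⟩ : (0 : ℝ) ∈ (fun g => (upperLeftDet n g).re) '' sglglFlagStabilizer n :=
    hC.isPreconnected.intermediate_value hminus hplus hcont.continuousOn
      (by simp [upperLeftDet_diagonal_append, sign])
  rcases sq_eq_one_iff.mp (upperLeftDet_sq_eq_one hg) with h | h <;> simp [h] at hg0
end
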